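/- arXiv:2512.01966 — 5 statements merged into one kernel-verified Lean document; each statement's English description precedes it below -/
import Mathlib

section
/- Let X and ∂X be Banach spaces, A : D(A) ⊆ X → X a linear operator, L : D(A) → ∂X a linear boundary operator, and B : D(B) ⊆ X → ∂X with D(A) ⊆ D(B). Assume B is relatively bounded with respect to the operator (A,L) : D(A) → X × ∂X equipped with its graph norm (i.e., B is continuous from D(A) with the (A,L)-graph norm to ∂X). Then the operator matrix Ã = [[A,0],[B,0]] on X × ∂X with domain D(Ã) = {(u,v) ∈ D(A) × ∂X : Lu = v} is closed if and only if the operator (A,L) : D(A) ⊆ X → X × ∂X, u ↦ (Au, Lu), is closed. -/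
open Filter Topology

private lemma cauchy_of_dom {Y Z : Type*} [NormedAddCommGroup Y] [NormedAddCommGroup Z]
    {b : ℕ → Y} {w : ℕ → Z} {c : ℝ}
    (hw : CauchySeq w) (h : ∀ m n, ‖b m - b n‖ ≤ c * ‖w m - w n‖) :
    CauchySeq b := by
  rw [Metric.cauchySeq_iff] at hw ⊢
  intro ε hε
  obtain ⟨N, hN⟩ := hw (ε / (|c| + 1)) (by positivity)
  refine ⟨N, fun m hm n hn => ?_⟩
  have h1 := hN m hm n hn
  rw [dist_eq_norm] at h1 ⊢
  calc ‖b m - b n‖ ≤ c * ‖w m - w n‖ := h m n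
    _ ≤ |c| * ‖w m - w n‖ :=
        mul_le_mul_of_nonneg_right (le_abs_self c) (norm_nonneg _)
    _ ≤ |c| * (ε / (|c| + 1)) :=
        mul_le_mul_of_nonneg_left h1.le (abs_nonneg c)
    _ < (|c| + 1) * (ε / (|c| + 1)) := by
        have : (0:ℝ) < ε / (|c| + 1) := by positivity
        nlinarith [abs_nonneg c]
    _ = ε := by field_simp

/-- With `B` relatively `(A,L)`-bounded, the operator matrix
`Ã = [[A,0],[B,0]]` with coupled domain `{(u,v) : u ∈ D(A), Lu = v}` is closed
iff the operator `(A,L) : D(A) → X × ∂X` is closed (closedness = closed graph). -/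
theorem stmt0
    {X Y : Type*} [NormedAddCommGroup X] [NormedSpace ℂ X] [CompleteSpace X]
    [NormedAddCommGroup Y] [NormedSpace ℂ Y] [CompleteSpace Y]
    (D : Submodule ℂ X) (A : D →ₗ[ℂ] X) (L : D →ₗ[ℂ] Y) (B : D →ₗ[ℂ] Y)
    (c : ℝ) (hB : ∀ u : D, ‖B u‖ ≤ c * (‖(u : X)‖ + ‖A u‖ + ‖L u‖)) :
    IsClosed (Set.range fun u : D => ((((u : X), L u) : X × Y), ((A u, B u) : X × Y)))
      ↔ IsClosed (Set.range fun u : D => (((u : X), ((A u, L u) : X × Y)) : X × (X × Y))) := by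
  set c' := max c 0 with hc'def
  have hc'0 : 0 ≤ c' := le_max_right _ _
  have hB' : ∀ u : D, ‖B u‖ ≤ c' * (‖(u : X)‖ + ‖A u‖ + ‖L u‖) := fun u =>
    (hB u).trans (mul_le_mul_of_nonneg_right (le_max_left _ _) (by positivity))
  constructor
  · -- matrix closed → (A,L) closed
    intro h
    rw [← isSeqClosed_iff_isClosed] at h ⊢
    intro s p hs hp
    choose u hu using hs
    have hp' : Tendsto (fun n => (((u n : X), ((A (u n), L (u n)) : X × Y)) : X × (X × Y)))
        atTop (𝓝 p) := by
      simpa only [hu] using hp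
    have hx : Tendsto (fun n => (u n : X)) atTop (𝓝 p.1) :=
      (continuous_fst.tendsto p).comp hp'
    have ha : Tendsto (fun n => A (u n)) atTop (𝓝 p.2.1) :=
      ((continuous_fst.tendsto p.2).comp ((continuous_snd.tendsto p).comp hp'))
    have hy : Tendsto (fun n => L (u n)) atTop (𝓝 p.2.2) :=
      ((continuous_snd.tendsto p.2).comp ((continuous_snd.tendsto p).comp hp'))
    -- B (u n) is Cauchy
    have hcw : CauchySeq (fun n => (((u n : X), ((A (u n), L (u n)) : X × Y)) : X × (X × Y))) :=
      hp'.cauchySeq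
    have hcb : CauchySeq (fun n => B (u n)) := by
      refine cauchy_of_dom (c := 3 * c') hcw fun m n => ?_
      have h1 : ‖B (u m) - B (u n)‖ = ‖B (u m - u n)‖ := by rw [map_sub]
      rw [h1]
      refine (hB' _).trans ?_
      have e1 : ‖((u m - u n : D) : X)‖ ≤
          ‖(((u m : X), ((A (u m), L (u m)) : X × Y)) : X × (X × Y))
            - (((u n : X), ((A (u n), L (u n)) : X × Y)) : X × (X × Y))‖ := by
        simpa using (norm_fst_le ((((u m : X) - (u n : X)),
          (((A (u m) - A (u n)), (L (u m) - L (u n))) : X × Y)) : X × (X × Y)))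
      have e2 : ‖A (u m - u n)‖ ≤
          ‖(((u m : X), ((A (u m), L (u m)) : X × Y)) : X × (X × Y))
            - (((u n : X), ((A (u n), L (u n)) : X × Y)) : X × (X × Y))‖ := by
        have := (norm_fst_le (((A (u m) - A (u n)), (L (u m) - L (u n))) : X × Y)).trans
          (norm_snd_le ((((u m : X) - (u n : X)),
            (((A (u m) - A (u n)), (L (u m) - L (u n))) : X × Y)) : X × (X × Y)))
        simpa [map_sub] using this
      have e3 : ‖L (u m - u n)‖ ≤
          ‖(((u m : X), ((A (u m), L (u m)) : X × Y)) : X × (X × Y))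
            - (((u n : X), ((A (u n), L (u n)) : X × Y)) : X × (X × Y))‖ := by
        have := (norm_snd_le (((A (u m) - A (u n)), (L (u m) - L (u n))) : X × Y)).trans
          (norm_snd_le ((((u m : X) - (u n : X)),
            (((A (u m) - A (u n)), (L (u m) - L (u n))) : X × Y)) : X × (X × Y)))
        simpa [map_sub] using this
      nlinarith [norm_nonneg (((u m - u n : D) : X))]
    obtain ⟨b, hb⟩ := cauchySeq_tendsto_of_complete hcb
    -- the matrix sequence converges to ((p.1, p.2.2), (p.2.1, b))
    have hf : Tendsto (fun n => ((((u n : X), L (u n)) : X × Y), ((A (u n), B (u n)) : X × Y)))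
        atTop (𝓝 (((p.1, p.2.2) : X × Y), ((p.2.1, b) : X × Y))) :=
      (hx.prodMk_nhds hy).prodMk_nhds (ha.prodMk_nhds hb)
    have hmem := h (fun n => Set.mem_range_self (f := fun u : D =>
      ((((u : X), L u) : X × Y), ((A u, B u) : X × Y))) (u n)) hf
    obtain ⟨v, hv⟩ := hmem
    refine ⟨v, ?_⟩
    have h1 : (v : X) = p.1 := congrArg (fun q => q.1.1) hv
    have h2 : L v = p.2.2 := congrArg (fun q => q.1.2) hv
    have h3 : A v = p.2.1 := congrArg (fun q => q.2.1) hv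
    exact Prod.ext h1 (Prod.ext h3 h2)
  · -- (A,L) closed → matrix closed
    intro h
    rw [← isSeqClosed_iff_isClosed] at h ⊢
    intro s q hs hq
    choose u hu using hs
    have hq' : Tendsto (fun n => ((((u n : X), L (u n)) : X × Y), ((A (u n), B (u n)) : X × Y)))
        atTop (𝓝 q) := by
      simpa only [hu] using hq
    have hx : Tendsto (fun n => (u n : X)) atTop (𝓝 q.1.1) :=
      (continuous_fst.tendsto q.1).comp ((continuous_fst.tendsto q).comp hq')
    have hy : Tendsto (fun n => L (u n)) atTop (𝓝 q.1.2) :=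
      (continuous_snd.tendsto q.1).comp ((continuous_fst.tendsto q).comp hq')
    have ha : Tendsto (fun n => A (u n)) atTop (𝓝 q.2.1) :=
      (continuous_fst.tendsto q.2).comp ((continuous_snd.tendsto q).comp hq')
    have hbb : Tendsto (fun n => B (u n)) atTop (𝓝 q.2.2) :=
      (continuous_snd.tendsto q.2).comp ((continuous_snd.tendsto q).comp hq')
    have hg : Tendsto (fun n => (((u n : X), ((A (u n), L (u n)) : X × Y)) : X × (X × Y)))
        atTop (𝓝 ((q.1.1, ((q.2.1, q.1.2) : X × Y)) : X × (X × Y))) :=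
      hx.prodMk_nhds (ha.prodMk_nhds hy)
    obtain ⟨v, hv⟩ := h (fun n => Set.mem_range_self (f := fun u : D =>
      (((u : X), ((A u, L u) : X × Y)) : X × (X × Y))) (u n)) hg
    have h1 : (v : X) = q.1.1 := congrArg (fun r => r.1) hv
    have h3 : A v = q.2.1 := congrArg (fun r => r.2.1) hv
    have h2 : L v = q.1.2 := congrArg (fun r => r.2.2) hv
    -- show B (u n) → B v, so q.2.2 = B v
    have hBt : Tendsto (fun n => B (u n)) atTop (𝓝 (B v)) := by
      rw [tendsto_iff_norm_sub_tendsto_zero]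
      have hbound : ∀ n, ‖B (u n) - B v‖ ≤
          c' * (‖(u n : X) - (v : X)‖ + ‖A (u n) - A v‖ + ‖L (u n) - L v‖) := by
        intro n
        have := hB' (u n - v)
        simpa [map_sub] using this
      have h1' : Tendsto (fun n => ‖(u n : X) - (v : X)‖) atTop (𝓝 0) := by
        have := (hx.sub (tendsto_const_nhds (x := (v : X)))).norm
        simpa [h1] using this
      have h2' : Tendsto (fun n => ‖A (u n) - A v‖) atTop (𝓝 0) := by
        have := (ha.sub (tendsto_const_nhds (x := A v))).norm
        simpa [h3] using this
      have h3' : Tendsto (fun n => ‖L (u n) - L v‖) atTop (𝓝 0) := by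
        have := (hy.sub (tendsto_const_nhds (x := L v))).norm
        simpa [h2] using this
      have hbnd : Tendsto (fun n =>
          c' * (‖(u n : X) - (v : X)‖ + ‖A (u n) - A v‖ + ‖L (u n) - L v‖)) atTop (𝓝 0) := by
        have := ((h1'.add h2').add h3').const_mul c'
        simpa using this
      exact squeeze_zero (fun n => norm_nonneg _) hbound hbnd
    have hb2 : q.2.2 = B v := tendsto_nhds_unique hbb hBt
    refine ⟨v, ?_⟩
    exact Prod.ext (Prod.ext h1 h2) (Prod.ext h3 hb2.symm)
end

section
/- Let X, ∂X be Banach spaces, A : D(A) ⊆ X → X linear, L : D(A) → ∂X linear and surjective, and let A₀ be the restriction of A to ker(L). Assume (A,L) : D(A) → X × ∂X is closed and λ ∈ ρ(A₀) (the resolvent set of A₀). Then the restriction of L to ker(λ − A) is a bijection onto ∂X, and its inverse D_λ : ∂X → ker(λ − A) ⊆ X ('Dirichlet operator') is a bounded linear operator. -/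
/-- Greiner's lemma. Under the assumptions that `L` is surjective,
`(A,L)` is closed and `λ ∈ ρ(A₀)` (witnessed by the bounded resolvent operator `R`
of `A₀ = A|_{ker L}`), the restriction of `L` to `ker(λ - A)` is bijective onto `∂X`
with bounded inverse: the Dirichlet operator `D_λ`. -/
theorem stmt2
    {X Y : Type*} [NormedAddCommGroup X] [NormedSpace ℂ X] [CompleteSpace X]
    [NormedAddCommGroup Y] [NormedSpace ℂ Y] [CompleteSpace Y]
    (D : Submodule ℂ X) (A : D →ₗ[ℂ] X) (L : D →ₗ[ℂ] Y) (lam : ℂ)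
    (hLsurj : Function.Surjective L)
    (hclosed : IsClosed (Set.range fun u : D => (((u : X), ((A u, L u) : X × Y)) : X × (X × Y))))
    -- `lam ∈ ρ(A₀)`: `R` is a two-sided bounded inverse of `lam - A₀` on `ker L`
    (R : X →L[ℂ] X)
    (hR1 : ∀ x : X, ∃ h : R x ∈ D, L ⟨R x, h⟩ = 0 ∧ lam • R x - A ⟨R x, h⟩ = x)
    (hR2 : ∀ u : D, L u = 0 → R (lam • (u : X) - A u) = (u : X)) :
    ∃ Dl : Y →L[ℂ] X,
      (∀ v : Y, ∃ h : Dl v ∈ D, A ⟨Dl v, h⟩ = lam • Dl v ∧ L ⟨Dl v, h⟩ = v) ∧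
      (∀ u : D, A u = lam • (u : X) → Dl (L u) = (u : X)) := by
  classical
  -- uniqueness on the eigenspace
  have uniq0 : ∀ u : D, A u = lam • (u : X) → L u = 0 → (u : X) = 0 := by
    intro u hA hL
    have h := hR2 u hL
    rw [hA, sub_self, map_zero] at h
    exact h.symm
  have eq_of : ∀ u u' : D, A u = lam • (u : X) → A u' = lam • (u' : X) →
      L u = L u' → (u : X) = (u' : X) := by
    intro u u' hA hA' hL
    have h0 : ((u - u' : D) : X) = 0 := by
      apply uniq0
      · rw [map_sub, hA, hA']
        push_cast
        rw [smul_sub]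
      · rw [map_sub, hL, sub_self]
    have : (u : X) - (u' : X) = 0 := by simpa using h0
    exact sub_eq_zero.mp this
  -- existence of eigenvectors with prescribed boundary value
  have exist : ∀ v : Y, ∃ u : D, A u = lam • (u : X) ∧ L u = v := by
    intro v
    obtain ⟨w, hw⟩ := hLsurj v
    set x : X := lam • (w : X) - A w with hx
    obtain ⟨h, hL0, hres⟩ := hR1 x
    refine ⟨w - ⟨R x, h⟩, ?_, ?_⟩
    · have hA : A (⟨R x, h⟩ : D) = lam • R x - x := by
        have h2 := sub_eq_iff_eq_add.mp hres
        rw [h2]; abel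
      rw [map_sub, hA]
      push_cast
      rw [smul_sub, hx]
      abel
    · rw [map_sub, hL0, sub_zero, hw]
  -- the Dirichlet map
  set f : Y → D := fun v => (exist v).choose with hf
  have hfA : ∀ v, A (f v) = lam • ((f v : D) : X) := fun v => (exist v).choose_spec.1
  have hfL : ∀ v, L (f v) = v := fun v => (exist v).choose_spec.2
  set g : Y →ₗ[ℂ] X :=
    { toFun := fun v => ((f v : D) : X)
      map_add' := by
        intro v w
        have := eq_of (f (v + w)) (f v + f w) (hfA _)
          (by rw [map_add, hfA, hfA]; push_cast; rw [smul_add])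
          (by rw [map_add, hfL, hfL, hfL])
        simpa using this
      map_smul' := by
        intro c v
        have := eq_of (f (c • v)) (c • f v) (hfA _)
          (by rw [map_smul, hfA]; push_cast; rw [smul_comm])
          (by rw [map_smul, hfL, hfL])
        simpa using this } with hg
  -- closed graph
  have hgraph : IsClosed (g.graph : Set (Y × X)) := by
    have hset : (g.graph : Set (Y × X)) =
        (fun p : Y × X => ((p.2, (lam • p.2, p.1)) : X × (X × Y))) ⁻¹'
          (Set.range fun u : D => (((u : X), ((A u, L u) : X × Y)) : X × (X × Y))) := by
      ext ⟨v, x⟩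
      simp only [SetLike.mem_coe, LinearMap.mem_graph_iff, Set.mem_preimage, Set.mem_range]
      constructor
      · intro hx
        have h1 : ((f v : D) : X) = x := hx.symm
        refine ⟨f v, ?_⟩
        rw [hfA v, hfL v, h1]
      · rintro ⟨u, hu⟩
        have h1 : (u : X) = x := congrArg Prod.fst hu
        have h2' : A u = lam • x := congrArg (fun p : X × X × Y => p.2.1) hu
        have h3' : L u = v := congrArg (fun p : X × X × Y => p.2.2) hu
        have := eq_of (f v) u (hfA v) (by rw [h2', h1]) (by rw [hfL, h3'])
        rw [← h1, ← this]
        rfl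
    rw [hset]
    exact hclosed.preimage (continuous_snd.prodMk
      ((continuous_snd.const_smul lam).prodMk continuous_fst))
  refine ⟨ContinuousLinearMap.ofIsClosedGraph hgraph, ?_, ?_⟩
  · intro v
    have hcoe : ContinuousLinearMap.ofIsClosedGraph hgraph v = ((f v : D) : X) := rfl
    refine ⟨hcoe ▸ (f v).2, ?_, ?_⟩
    · have : (⟨ContinuousLinearMap.ofIsClosedGraph hgraph v, hcoe ▸ (f v).2⟩ : D) = f v :=
        Subtype.ext hcoe
      rw [this, hfA, hcoe]
    · have : (⟨ContinuousLinearMap.ofIsClosedGraph hgraph v, hcoe ▸ (f v).2⟩ : D) = f v :=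
        Subtype.ext hcoe
      rw [this, hfL]
  · intro u hA
    exact eq_of (f (L u)) u (hfA _) hA (hfL _)
end

section
/- Under the Greiner assumptions, for λ ∈ ρ(A₀) the operator matrix 𝒜 − λ on X × ∂X (with 𝒜 = diag(A,0), D(𝒜) = {(u,v) : u ∈ D(A), Lu = v}) factorizes as 𝒜 − λ = 𝒜_λ ∘ ℛ_λ, where 𝒜_λ = diag(A₀ − λ, −λ) with domain D(A₀) × ∂X and ℛ_λ = [[I, −D_λ],[0, I]] is the bounded invertible operator (u,v) ↦ (u − D_λ v, v). In particular, for all (u,v) ∈ D(𝒜), 𝒜_λ ℛ_λ (u,v) = ((A−λ)u, −λ v). -/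
/-- Under the Greiner assumptions, `𝒜 - λ` factorizes as `𝒜_λ ℛ_λ`
with `𝒜_λ = diag(A₀ - λ, -λ)` on `D(A₀) × ∂X` and `ℛ_λ = [[I, -D_λ],[0, I]]`
bounded and invertible; in particular `𝒜_λ ℛ_λ (u,v) = ((A-λ)u, -λv)` on `D(𝒜)`. -/
theorem stmt7
    {X Y : Type*} [NormedAddCommGroup X] [NormedSpace ℂ X] [CompleteSpace X]
    [NormedAddCommGroup Y] [NormedSpace ℂ Y] [CompleteSpace Y]
    (D : Submodule ℂ X) (A : D →ₗ[ℂ] X) (L : D →ₗ[ℂ] Y) (lam : ℂ)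
    (hLsurj : Function.Surjective L)
    (hclosed : IsClosed (Set.range fun u : D => (((u : X), ((A u, L u) : X × Y)) : X × (X × Y))))
    -- `lam ∈ ρ(A₀)`
    (R : X →L[ℂ] X)
    (hR1 : ∀ x : X, ∃ h : R x ∈ D, L ⟨R x, h⟩ = 0 ∧ lam • R x - A ⟨R x, h⟩ = x)
    (hR2 : ∀ u : D, L u = 0 → R (lam • (u : X) - A u) = (u : X))
    -- the Dirichlet operator at `lam`: bounded, `(λ-A)D_λ = 0`, `L D_λ = I`
    (Dl : Y →L[ℂ] X)
    (hDl : ∀ v : Y, ∃ h : Dl v ∈ D, A ⟨Dl v, h⟩ = lam • Dl v ∧ L ⟨Dl v, h⟩ = v)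
    (hDl2 : ∀ u : D, A u = lam • (u : X) → Dl (L u) = (u : X)) :
    -- `ℛ_λ : (u,v) ↦ (u - D_λ v, v)` is invertible with inverse `(u,v) ↦ (u + D_λ v, v)`
    (∀ p : X × Y, ((p.1 - Dl p.2) + Dl p.2, p.2) = p) ∧
    (∀ p : X × Y, ((p.1 + Dl p.2) - Dl p.2, p.2) = p) ∧
    -- the factorization `𝒜 - λ = 𝒜_λ ℛ_λ` on `D(𝒜)`
    (∀ (u : X) (v : Y) (h : u ∈ D), L ⟨u, h⟩ = v →
      ∃ h2 : u - Dl v ∈ D, L ⟨u - Dl v, h2⟩ = 0 ∧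
        ((A ⟨u - Dl v, h2⟩ - lam • (u - Dl v), -(lam • v)) : X × Y)
          = ((A ⟨u, h⟩ - lam • u, -(lam • v)) : X × Y)) := by
  refine ⟨fun p => by simp, fun p => by simp, fun u v h hLv => ?_⟩
  obtain ⟨hd, hAd, hLd⟩ := hDl v
  have h2 : u - Dl v ∈ D := D.sub_mem h hd
  have key : (⟨u - Dl v, h2⟩ : D) = ⟨u, h⟩ - ⟨Dl v, hd⟩ := rfl
  refine ⟨h2, ?_, ?_⟩
  · rw [key, map_sub, hLv, hLd, sub_self]
  · rw [key, map_sub, hAd]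
    simp only [Prod.mk.injEq, and_true, smul_sub]
    abel
end

section
/- Under the Greiner assumptions, for every λ ∈ ρ(A₀) with λ ≠ 0, λ belongs to the resolvent set of the operator matrix 𝒜 = diag(A,0) with coupled domain D(𝒜) = {(u,v) ∈ D(A) × ∂X : Lu = v}, and its resolvent is the operator matrix R(λ, 𝒜) = [[R(λ,A₀), (1/λ) D_λ],[0, (1/λ) I]]. -/
/-- Under the Greiner assumptions, every `λ ∈ ρ(A₀) \ {0}` belongs to
`ρ(𝒜)` for `𝒜 = diag(A,0)` with coupled domain, and
`R(λ,𝒜) = [[R(λ,A₀), λ⁻¹ D_λ],[0, λ⁻¹ I]]`, i.e. this operator matrix is a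
two-sided inverse of `λ - 𝒜` mapping into `D(𝒜)`. -/
theorem stmt8
    {X Y : Type*} [NormedAddCommGroup X] [NormedSpace ℂ X] [CompleteSpace X]
    [NormedAddCommGroup Y] [NormedSpace ℂ Y] [CompleteSpace Y]
    (D : Submodule ℂ X) (A : D →ₗ[ℂ] X) (L : D →ₗ[ℂ] Y) (lam : ℂ) (hlam : lam ≠ 0)
    (hLsurj : Function.Surjective L)
    (hclosed : IsClosed (Set.range fun u : D => (((u : X), ((A u, L u) : X × Y)) : X × (X × Y))))
    -- `lam ∈ ρ(A₀)`: `R` is the resolvent `R(lam, A₀)`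
    (R : X →L[ℂ] X)
    (hR1 : ∀ x : X, ∃ h : R x ∈ D, L ⟨R x, h⟩ = 0 ∧ lam • R x - A ⟨R x, h⟩ = x)
    (hR2 : ∀ u : D, L u = 0 → R (lam • (u : X) - A u) = (u : X))
    -- the Dirichlet operator at `lam`
    (Dl : Y →L[ℂ] X)
    (hDl : ∀ v : Y, ∃ h : Dl v ∈ D, A ⟨Dl v, h⟩ = lam • Dl v ∧ L ⟨Dl v, h⟩ = v)
    (hDl2 : ∀ u : D, A u = lam • (u : X) → Dl (L u) = (u : X)) :
    -- `R(λ,𝒜)(x,w) = (R(λ,A₀)x + λ⁻¹ D_λ w, λ⁻¹ w)` maps into `D(𝒜)` and inverts `λ - 𝒜`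
    (∀ (x : X) (w : Y), ∃ h : R x + lam⁻¹ • Dl w ∈ D,
      L ⟨R x + lam⁻¹ • Dl w, h⟩ = lam⁻¹ • w ∧
      lam • (R x + lam⁻¹ • Dl w) - A ⟨R x + lam⁻¹ • Dl w, h⟩ = x ∧
      lam • (lam⁻¹ • w) - (0 : Y) = w) ∧
    -- and it is a left inverse of `λ - 𝒜` on `D(𝒜)`
    (∀ (u : D) (v : Y), L u = v →
      R (lam • (u : X) - A u) + lam⁻¹ • Dl (lam • v - 0) = (u : X) ∧
      lam⁻¹ • (lam • v - 0) = v) := by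
  constructor
  · intro x w
    obtain ⟨h1, hL1, hA1⟩ := hR1 x
    obtain ⟨h2, hA2, hL2⟩ := hDl w
    have hmem : R x + lam⁻¹ • Dl w ∈ D := D.add_mem h1 (D.smul_mem _ h2)
    refine ⟨hmem, ?_, ?_, ?_⟩
    · have : (⟨R x + lam⁻¹ • Dl w, hmem⟩ : D)
          = ⟨R x, h1⟩ + lam⁻¹ • ⟨Dl w, h2⟩ := by ext; simp
      rw [this, map_add, map_smul, hL1, hL2, zero_add]
    · have : (⟨R x + lam⁻¹ • Dl w, hmem⟩ : D)
          = ⟨R x, h1⟩ + lam⁻¹ • ⟨Dl w, h2⟩ := by ext; simp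
      rw [this, map_add, map_smul, hA2, smul_add, smul_smul,
        mul_inv_cancel₀ hlam, one_smul, smul_smul, inv_mul_cancel₀ hlam, one_smul]
      abel_nf
      abel_nf at hA1
      exact hA1
    · rw [smul_smul, mul_inv_cancel₀ hlam, one_smul, sub_zero]
  · intro u v huv
    obtain ⟨h2, hA2, hL2⟩ := hDl v
    set d : D := ⟨Dl v, h2⟩
    have hL0 : L (u - d) = 0 := by rw [map_sub, huv, hL2, sub_self]
    have key := hR2 (u - d) hL0
    have hAd : lam • (↑(u - d) : X) - A (u - d) = lam • (u : X) - A u := by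
      push_cast [map_sub]
      rw [hA2]
      module
    rw [hAd] at key
    constructor
    · rw [key, sub_zero, map_smul, smul_smul, inv_mul_cancel₀ hlam, one_smul]
      push_cast
      abel
    · rw [sub_zero, smul_smul, inv_mul_cancel₀ hlam, one_smul]
end

section
/- Under the Greiner assumptions, if the operator matrix 𝒜 = diag(A,0) with domain {(u,v) : u ∈ D(A), Lu = v} generates a bounded C₀-semigroup (𝒯(t)) on X × ∂X of the form 𝒯(t) = [[T(t), Q(t)],[0, I]], then the semigroup (T(t)) generated by A₀ is bounded; conversely, if A₀ is invertible and generates a bounded C₀-semigroup (T(t)), then the semigroup 𝒯(t) = [[T(t), (I−T(t))D₀],[0, I]] is bounded, with sup_t ‖𝒯(t)‖ ≤ C(1 + ‖D₀‖) for some constant C depending only on sup_t ‖T(t)‖. -/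
/-- (i) If `𝒜` generates a bounded semigroup `𝒯(t) = [[T(t), Q(t)],[0,I]]`,
then `(T(t))` is bounded. (ii) Conversely, if `A₀` is invertible and `(T(t))` is a
bounded semigroup, then `𝒯(t) = [[T(t), (I-T(t))D₀],[0,I]]` is bounded with
`‖𝒯(t)‖ ≤ C(1 + ‖D₀‖)` for a constant `C` depending only on `sup_t ‖T(t)‖`. -/
theorem stmt11
    {X Y : Type*} [NormedAddCommGroup X] [NormedSpace ℂ X] [CompleteSpace X]
    [NormedAddCommGroup Y] [NormedSpace ℂ Y] [CompleteSpace Y] :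
    -- (i)
    (∀ (TT : ℝ → (X × Y) →L[ℂ] (X × Y)) (T : ℝ → X →L[ℂ] X) (Q : ℝ → Y →L[ℂ] X),
      (∀ t : ℝ, 0 ≤ t → ∀ (x : X) (w : Y), TT t (x, w) = (T t x + Q t w, w)) →
      (∃ M : ℝ, ∀ t : ℝ, 0 ≤ t → ‖TT t‖ ≤ M) →
      ∃ M' : ℝ, ∀ t : ℝ, 0 ≤ t → ‖T t‖ ≤ M') ∧
    -- (ii)
    (∀ (M : ℝ), 0 ≤ M → ∃ C : ℝ, 0 < C ∧
      ∀ (T : ℝ → X →L[ℂ] X), (∀ t : ℝ, 0 ≤ t → ‖T t‖ ≤ M) →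
      ∀ (D0 : Y →L[ℂ] X) (t : ℝ), 0 ≤ t → ∀ (x : X) (w : Y),
        ‖((T t x + (D0 w - T t (D0 w)), w) : X × Y)‖
          ≤ C * (1 + ‖D0‖) * ‖((x, w) : X × Y)‖) := by
  constructor
  · rintro TT T Q hform ⟨M, hM⟩
    refine ⟨M, fun t ht => ?_⟩
    refine ContinuousLinearMap.opNorm_le_bound _ (le_trans (norm_nonneg _) (hM t ht)) ?_
    intro x
    have h := hform t ht x 0
    have h1 : ‖T t x + Q t 0‖ ≤ ‖TT t (x, 0)‖ := by
      rw [h]; exact le_max_left _ _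
    have h2 : ‖TT t (x, 0)‖ ≤ M * ‖((x, 0) : X × Y)‖ :=
      le_trans (ContinuousLinearMap.le_opNorm _ _)
        (mul_le_mul_of_nonneg_right (hM t ht) (norm_nonneg _))
    have h3 : ‖((x, 0) : X × Y)‖ = ‖x‖ := by
      simp [Prod.norm_def]
    calc ‖T t x‖ = ‖T t x + Q t 0‖ := by simp
      _ ≤ M * ‖((x, 0) : X × Y)‖ := le_trans h1 h2
      _ = M * ‖x‖ := by rw [h3]
  · intro M hM
    refine ⟨M + 1, by linarith, fun T hT D0 t ht x w => ?_⟩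
    have hxw : ‖x‖ ≤ ‖((x, w) : X × Y)‖ := le_max_left _ _
    have hw : ‖w‖ ≤ ‖((x, w) : X × Y)‖ := le_max_right _ _
    have hD0 : (0:ℝ) ≤ ‖D0‖ := norm_nonneg _
    have hTx : ‖T t x‖ ≤ M * ‖x‖ :=
      le_trans (ContinuousLinearMap.le_opNorm _ _)
        (mul_le_mul_of_nonneg_right (hT t ht) (norm_nonneg _))
    have hDw : ‖D0 w‖ ≤ ‖D0‖ * ‖w‖ := ContinuousLinearMap.le_opNorm _ _
    have hTDw : ‖T t (D0 w)‖ ≤ M * (‖D0‖ * ‖w‖) :=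
      le_trans (le_trans (ContinuousLinearMap.le_opNorm _ _)
        (mul_le_mul_of_nonneg_right (hT t ht) (norm_nonneg _)))
        (mul_le_mul_of_nonneg_left hDw hM)
    have hfirst : ‖T t x + (D0 w - T t (D0 w))‖
        ≤ (M + 1) * (1 + ‖D0‖) * ‖((x, w) : X × Y)‖ := by
      calc ‖T t x + (D0 w - T t (D0 w))‖
          ≤ ‖T t x‖ + (‖D0 w‖ + ‖T t (D0 w)‖) := by
            refine le_trans (norm_add_le _ _) ?_
            exact add_le_add (le_refl _) (norm_sub_le _ _)
        _ ≤ M * ‖x‖ + (‖D0‖ * ‖w‖ + M * (‖D0‖ * ‖w‖)) := by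
            exact add_le_add hTx (add_le_add hDw hTDw)
        _ ≤ (M + 1) * (1 + ‖D0‖) * ‖((x, w) : X × Y)‖ := by
            have h1 : M * ‖x‖ ≤ M * ‖((x, w) : X × Y)‖ :=
              mul_le_mul_of_nonneg_left hxw hM
            have h2 : ‖D0‖ * ‖w‖ ≤ ‖D0‖ * ‖((x, w) : X × Y)‖ :=
              mul_le_mul_of_nonneg_left hw hD0
            have h3 : M * (‖D0‖ * ‖w‖) ≤ M * (‖D0‖ * ‖((x, w) : X × Y)‖) :=
              mul_le_mul_of_nonneg_left (mul_le_mul_of_nonneg_left hw hD0) hM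
            nlinarith [norm_nonneg ((x, w) : X × Y)]
    have hsecond : ‖w‖ ≤ (M + 1) * (1 + ‖D0‖) * ‖((x, w) : X × Y)‖ := by
      have : (1:ℝ) ≤ (M + 1) * (1 + ‖D0‖) := by nlinarith
      nlinarith [norm_nonneg ((x, w) : X × Y)]
    exact max_le hfirst hsecond
end
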